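/- Every maximal left-sided element of a semi-integral quantale is prime. -/

import Mathlib

/-- A quantale: a complete lattice with an associative multiplication that
preserves arbitrary joins in each variable. -/
class FileQuantale (α : Type*) extends CompleteLattice α, Semigroup α where
  mul_sSup_eq : ∀ (a : α) (s : Set α), a * sSup s = ⨆ b ∈ s, a * b
  sSup_mul_eq : ∀ (s : Set α) (a : α), sSup s * a = ⨆ b ∈ s, b * a

section Defs

variable {α : Type*} [FileQuantale α]

/-- `a` is left-sided: `⊤ * a ≤ a`. -/
def IsLeftSided (a : α) : Prop := ⊤ * a ≤ a

/-- `a` is right-sided: `a * ⊤ ≤ a`. -/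
def IsRightSided (a : α) : Prop := a * ⊤ ≤ a

/-- `a` is two-sided. -/
def IsTwoSided (a : α) : Prop := IsLeftSided a ∧ IsRightSided a

/-- A quantale is semi-unital if `a ≤ ⊤ * a` and `a ≤ a * ⊤` for all `a`. -/
def SemiUnital (α : Type*) [FileQuantale α] : Prop := ∀ a : α, a ≤ ⊤ * a ∧ a ≤ a * ⊤

/-- A quantale is semi-integral if `a * ⊤ * b ≤ a * b` for all `a`, `b`. -/
def SemiIntegral (α : Type*) [FileQuantale α] : Prop := ∀ a b : α, a * ⊤ * b ≤ a * b

/-- A quantale is a factor if its only two-sided elements are `⊥` and `⊤`. -/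
def IsFactor (α : Type*) [FileQuantale α] : Prop := ∀ a : α, IsTwoSided a → a = ⊥ ∨ a = ⊤

/-- Prime element of a quantale. -/
def IsPrime (p : α) : Prop :=
  p ≠ ⊤ ∧ ∀ a b : α, a * b ≤ p → a * ⊤ ≤ p ∨ ⊤ * b ≤ p

/-- Strongly prime element of a quantale. -/
def IsStronglyPrime (p : α) : Prop :=
  p ≠ ⊤ ∧ ∀ a b : α, a * b ≤ p → a ⊔ a * ⊤ ≤ p ∨ b ⊔ ⊤ * b ≤ p

/-- A quantale is spatial if every element is a meet of prime elements. -/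
def Spatial (α : Type*) [FileQuantale α] : Prop :=
  ∀ a : α, ∃ S : Set α, (∀ p ∈ S, IsPrime p) ∧ a = sInf S

/-- A quantale is strongly spatial if every element is a meet of strongly prime elements. -/
def StronglySpatial (α : Type*) [FileQuantale α] : Prop :=
  ∀ a : α, ∃ S : Set α, (∀ p ∈ S, IsStronglyPrime p) ∧ a = sInf S

end Defs

/-! If `a * b ≤ m` with `m` maximal left-sided, then `m ⊔ ⊤ * b` is left-sided, so it is either
`m` (whence `⊤ * b ≤ m`) or `⊤`. In the latter case
`a * ⊤ = a * m ⊔ a * ⊤ * b ≤ m ⊔ a * b ≤ m`, using left-sidedness of `m` and semi-integrality. -/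

namespace FileQuantale

variable {α : Type*} [FileQuantale α]

theorem mul_sup (a b c : α) : a * (b ⊔ c) = a * b ⊔ a * c := by
  simpa only [sSup_pair, iSup_pair] using mul_sSup_eq a {b, c}

theorem sup_mul (a b c : α) : (a ⊔ b) * c = a * c ⊔ b * c := by
  simpa only [sSup_pair, iSup_pair] using sSup_mul_eq {a, b} c

theorem mul_le_mul_right {a b : α} (h : a ≤ b) (c : α) : a * c ≤ b * c := by
  rw [← sup_eq_right.mpr h, sup_mul]
  exact le_sup_left

end FileQuantale

section LeftSided

variable {α : Type*} [FileQuantale α]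

theorem IsLeftSided.mul_le {x : α} (hx : IsLeftSided x) (a : α) : a * x ≤ x :=
  (FileQuantale.mul_le_mul_right le_top x).trans hx

theorem isLeftSided_top_mul (b : α) : IsLeftSided (⊤ * b) := by
  rw [IsLeftSided, ← mul_assoc]
  exact FileQuantale.mul_le_mul_right le_top b

theorem IsLeftSided.sup {x y : α} (hx : IsLeftSided x) (hy : IsLeftSided y) :
    IsLeftSided (x ⊔ y) := by
  rw [IsLeftSided, FileQuantale.mul_sup]
  exact sup_le_sup hx hy

end LeftSided

/-- Every maximal left-sided element of a semi-integral quantale is prime. -/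
theorem stmt4 {Q : Type*} [FileQuantale Q] (hsi : SemiIntegral Q) (m : Q)
    (hm : IsLeftSided m) (hmt : m ≠ ⊤)
    (hmax : ∀ x : Q, IsLeftSided x → m ≤ x → x = m ∨ x = ⊤) :
    IsPrime m := by
  refine ⟨hmt, fun a b hab => ?_⟩
  rcases hmax _ (hm.sup (isLeftSided_top_mul b)) le_sup_left with h | h
  · exact Or.inr (sup_eq_left.mp h)
  · left
    calc a * ⊤ = a * (m ⊔ ⊤ * b) := by rw [h]
      _ = a * m ⊔ a * ⊤ * b := by rw [FileQuantale.mul_sup, mul_assoc]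
      _ ≤ m := sup_le (hm.mul_le a) ((hsi a b).trans hab)
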